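/- Suppose ε ∈ (0,1), σ_a, σ_t : X → ℝ are measurable functions with 0 < σ_a^min ≤ σ_a ≤ σ_t ≤ σ^max a.e. on a measure space X, and suppose u₁,…,u_L, f₁,…,f_L ∈ L²(X) satisfy the energy identity ε∫σ_a u₁² + (1/ε)∑_{i=2}^L ∫σ_t u_i² = ε ∑_{i=1}^L ∫ f_i u_i. Then there is a constant C independent of ε such that ‖u₁‖ ≤ C(‖f₁‖ + ε∑_{i=2}^L‖f_i‖) and ‖u_i‖ ≤ C(ε‖f₁‖ + ε²∑_{j=2}^L‖f_j‖) for i = 2,…,L. -/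

import Mathlib

open MeasureTheory Real

/-!
Bounding `σ_a, σ_t` below by `σ_a^min` and the right-hand side by Cauchy–Schwarz turns the energy
identity into `σ_a^min ‖w‖² ≤ ⟪g, w⟫` for the rescaled vectors `w = (‖u₁‖, ‖u_i‖ / ε)` and
`g = (‖f₁‖, ε ‖f_i‖)`. Every component of `w` is at most its Euclidean norm `Q`, so
`⟪g, w⟫ ≤ (∑ g) Q`, hence `Q ≤ (∑ g) / σ_a^min`; this gives both estimates with `C = 1 / σ_a^min`.
-/

theorem integral_mul_le_sqrt_mul_sqrt {X : Type*} [MeasurableSpace X] {μ : Measure X}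
    {f g : X → ℝ} (hf : MemLp f 2 μ) (hg : MemLp g 2 μ) :
    ∫ x, f x * g x ∂μ ≤ √(∫ x, f x ^ 2 ∂μ) * √(∫ x, g x ^ 2 ∂μ) := by
  have hf' : MemLp f (ENNReal.ofReal 2) μ := by simpa using hf
  have hg' : MemLp g (ENNReal.ofReal 2) μ := by simpa using hg
  calc ∫ x, f x * g x ∂μ ≤ ∫ x, ‖f x‖ * ‖g x‖ ∂μ :=
        integral_mono (hf.integrable_mul hg) (hf.norm.integrable_mul hg.norm)
          fun x => by simpa [abs_mul] using le_abs_self (f x * g x)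
    _ ≤ (∫ x, ‖f x‖ ^ (2 : ℝ) ∂μ) ^ (1 / 2 : ℝ) * (∫ x, ‖g x‖ ^ (2 : ℝ) ∂μ) ^ (1 / 2 : ℝ) :=
        integral_mul_norm_le_Lp_mul_Lq Real.HolderConjugate.two_two hf' hg'
    _ = √(∫ x, f x ^ 2 ∂μ) * √(∫ x, g x ^ 2 ∂μ) := by
        simp only [rpow_two, norm_eq_abs, sq_abs, sqrt_eq_rpow]

theorem mul_integral_sq_le_integral_mul_sq {X : Type*} [MeasurableSpace X] {μ : Measure X}
    {σ g : X → ℝ} {c M : ℝ} (hσ : AEStronglyMeasurable σ μ) (hcσ : ∀ᵐ x ∂μ, c ≤ σ x)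
    (hσM : ∀ᵐ x ∂μ, σ x ≤ M) (hg : Integrable (fun x => g x ^ 2) μ) :
    c * ∫ x, g x ^ 2 ∂μ ≤ ∫ x, σ x * g x ^ 2 ∂μ := by
  have hσ_bdd : ∀ᵐ x ∂μ, ‖σ x‖ ≤ max |c| |M| := by
    filter_upwards [hcσ, hσM] with x hc hM
    exact abs_le_max_abs_abs hc hM
  rw [← integral_const_mul]
  exact integral_mono_ae (hg.const_mul c) (hg.bdd_mul hσ hσ_bdd) <| by
    filter_upwards [hcσ] with x hx
    exact mul_le_mul_of_nonneg_right hx (sq_nonneg _)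

theorem le_inv_mul_of_mul_sq_le_mul {c S Q : ℝ} (hc : 0 < c) (hS : 0 ≤ S)
    (h : c * Q ^ 2 ≤ S * Q) : Q ≤ c⁻¹ * S := by
  rw [← div_eq_inv_mul, le_div_iff₀ hc]
  nlinarith

theorem le_inv_mul_of_scaled_sum_sq_le_sum_mul {ι : Type*} (s : Finset ι) {ε c a₀ b₀ : ℝ}
    {a b : ι → ℝ} (hε : 0 < ε) (hc : 0 < c) (hb₀ : 0 ≤ b₀) (hb : ∀ i ∈ s, 0 ≤ b i)
    (h : c * (ε * a₀ ^ 2 + 1 / ε * ∑ i ∈ s, a i ^ 2) ≤ ε * (b₀ * a₀ + ∑ i ∈ s, b i * a i)) :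
    a₀ ≤ c⁻¹ * (b₀ + ε * ∑ i ∈ s, b i) ∧
      ∀ i ∈ s, a i ≤ c⁻¹ * (ε * b₀ + ε ^ 2 * ∑ j ∈ s, b j) := by
  set A := ∑ i ∈ s, a i ^ 2
  set Q := √(a₀ ^ 2 + A / ε ^ 2)
  have hA : 0 ≤ A / ε ^ 2 := by positivity
  have ha₀ : a₀ ≤ Q := (le_abs_self a₀).trans (abs_le_sqrt (le_add_of_nonneg_right hA))
  have ha : ∀ i ∈ s, a i ≤ ε * Q := by
    intro i hi
    have hi_le : (a i / ε) ^ 2 ≤ a₀ ^ 2 + A / ε ^ 2 := by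
      rw [div_pow]
      refine le_add_of_nonneg_of_le (sq_nonneg a₀) (div_le_div_of_nonneg_right ?_ (sq_nonneg ε))
      exact Finset.single_le_sum (fun j _ => sq_nonneg (a j)) hi
    rw [← div_le_iff₀' hε]
    exact (le_abs_self _).trans (abs_le_sqrt hi_le)
  have hQ : c * Q ^ 2 ≤ (b₀ + ε * ∑ i ∈ s, b i) * Q := by
    have hscaled : c * Q ^ 2 = ε⁻¹ * (c * (ε * a₀ ^ 2 + 1 / ε * A)) := by
      rw [sq_sqrt (by positivity)]
      field_simp
    calc c * Q ^ 2 ≤ b₀ * a₀ + ∑ i ∈ s, b i * a i := by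
          rw [hscaled, inv_mul_le_iff₀ hε]; exact h
      _ ≤ b₀ * Q + ∑ i ∈ s, b i * (ε * Q) := by
          gcongr with i hi
          · exact hb i hi
          · exact ha i hi
      _ = (b₀ + ε * ∑ i ∈ s, b i) * Q := by
          rw [add_mul, Finset.mul_sum, Finset.sum_mul]
          exact congrArg _ (Finset.sum_congr rfl fun i _ => by ring)
  have hQS := le_inv_mul_of_mul_sq_le_mul hc (by have := Finset.sum_nonneg hb; positivity) hQ
  refine ⟨ha₀.trans hQS, fun i hi => (ha i hi).trans ?_⟩
  calc ε * Q ≤ ε * (c⁻¹ * (b₀ + ε * ∑ i ∈ s, b i)) := by gcongr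
    _ = c⁻¹ * (ε * b₀ + ε ^ 2 * ∑ j ∈ s, b j) := by ring

/-- A priori estimate (Lemma 2.3): from the energy identity
`ε ∫ σ_a u₁² + (1/ε) ∑_{i≥2} ∫ σ_t u_i² = ε ∑_i ∫ f_i u_i`
with `0 < σ_a^min ≤ σ_a ≤ σ_t ≤ σ^max` a.e., one gets
`‖u₁‖ ≤ C (‖f₁‖ + ε ∑_{i≥2} ‖f_i‖)` and
`‖u_i‖ ≤ C (ε ‖f₁‖ + ε² ∑_{j≥2} ‖f_j‖)` for `i ≥ 2`,
with `C` independent of `ε` (depending only on `σ_a^min`, `σ^max` and `L`).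
Here `‖g‖ = (∫ g²)^{1/2}` is the `L²(X)` norm. -/
theorem stmt1 (X : Type*) [MeasurableSpace X] (μ : Measure X)
    (L : ℕ) (hL : 1 ≤ L) (σa σt : X → ℝ) (σamin σmax : ℝ)
    (hσmin : 0 < σamin)
    (hσ : ∀ᵐ x ∂μ, σamin ≤ σa x ∧ σa x ≤ σt x ∧ σt x ≤ σmax)
    (hσam : Measurable σa) (hσtm : Measurable σt) :
    ∃ C : ℝ, 0 < C ∧
      ∀ (ε : ℝ), 0 < ε → ε < 1 →
      ∀ (u f : Fin L → X → ℝ),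
        (∀ i, Measurable (u i)) → (∀ i, Measurable (f i)) →
        (∀ i, Integrable (fun x => (u i x) ^ 2) μ) →
        (∀ i, Integrable (fun x => (f i x) ^ 2) μ) →
        -- energy identity obtained by testing the P_N system with its own solution
        (ε * ∫ x, σa x * (u ⟨0, hL⟩ x) ^ 2 ∂μ
            + (1 / ε) * ∑ i ∈ Finset.univ.erase (⟨0, hL⟩ : Fin L),
                ∫ x, σt x * (u i x) ^ 2 ∂μ
          = ε * ∑ i : Fin L, ∫ x, f i x * u i x ∂μ) →
        (Real.sqrt (∫ x, (u ⟨0, hL⟩ x) ^ 2 ∂μ)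
            ≤ C * (Real.sqrt (∫ x, (f ⟨0, hL⟩ x) ^ 2 ∂μ)
              + ε * ∑ i ∈ Finset.univ.erase (⟨0, hL⟩ : Fin L),
                  Real.sqrt (∫ x, (f i x) ^ 2 ∂μ)))
        ∧ ∀ i ∈ Finset.univ.erase (⟨0, hL⟩ : Fin L),
            Real.sqrt (∫ x, (u i x) ^ 2 ∂μ)
              ≤ C * (ε * Real.sqrt (∫ x, (f ⟨0, hL⟩ x) ^ 2 ∂μ)
                + ε ^ 2 * ∑ j ∈ Finset.univ.erase (⟨0, hL⟩ : Fin L),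
                    Real.sqrt (∫ x, (f j x) ^ 2 ∂μ)) := by
  refine ⟨σamin⁻¹, inv_pos.2 hσmin, fun ε hε _ u f hum hfm hu2 hf2 hE => ?_⟩
  set z : Fin L := ⟨0, hL⟩
  set s := Finset.univ.erase z
  have hsq : ∀ i, √(∫ x, u i x ^ 2 ∂μ) ^ 2 = ∫ x, u i x ^ 2 ∂μ := fun i =>
    sq_sqrt (integral_nonneg fun _ => sq_nonneg _)
  have hu : ∀ i, MemLp (u i) 2 μ := fun i =>
    (memLp_two_iff_integrable_sq (hum i).aestronglyMeasurable).2 (hu2 i)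
  have hf : ∀ i, MemLp (f i) 2 μ := fun i =>
    (memLp_two_iff_integrable_sq (hfm i).aestronglyMeasurable).2 (hf2 i)
  have hlower :
      σamin * (ε * √(∫ x, u z x ^ 2 ∂μ) ^ 2 + 1 / ε * ∑ i ∈ s, √(∫ x, u i x ^ 2 ∂μ) ^ 2)
      ≤ ε * ∫ x, σa x * u z x ^ 2 ∂μ + 1 / ε * ∑ i ∈ s, ∫ x, σt x * u i x ^ 2 ∂μ := by
    simp only [hsq, mul_add, Finset.mul_sum, mul_left_comm σamin]
    gcongr with i
    · exact mul_integral_sq_le_integral_mul_sq hσam.aestronglyMeasurable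
        (hσ.mono fun _ hx => hx.1) (hσ.mono fun _ hx => hx.2.1.trans hx.2.2) (hu2 z)
    · exact mul_integral_sq_le_integral_mul_sq hσtm.aestronglyMeasurable
        (hσ.mono fun _ hx => hx.1.trans hx.2.1) (hσ.mono fun _ hx => hx.2.2) (hu2 i)
  have hupper : ε * ∑ i, ∫ x, f i x * u i x ∂μ ≤ ε * (√(∫ x, f z x ^ 2 ∂μ) * √(∫ x, u z x ^ 2 ∂μ)
      + ∑ i ∈ s, √(∫ x, f i x ^ 2 ∂μ) * √(∫ x, u i x ^ 2 ∂μ)) := by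
    rw [← Finset.add_sum_erase _ _ (Finset.mem_univ z)]
    gcongr with i <;> exact integral_mul_le_sqrt_mul_sqrt (hf _) (hu _)
  exact le_inv_mul_of_scaled_sum_sq_le_sum_mul s hε hσmin (sqrt_nonneg _)
    (fun _ _ => sqrt_nonneg _) (hlower.trans (hE ▸ hupper))
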